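/- Let S be a countable set, and let P(·|θ) and P(·|θ') be two probability mass functions on S with P(s|θ') > 0 for every s ∈ S, and c(s) = P(s|θ)/P(s|θ'). Suppose there exist constants α > 0, C > 0 and x₀ > 0 such that the tail bound P({s ∈ S : c(s) > x} | θ) ≤ C / x^α holds for all x ≥ x₀ (a Pareto-type tail). Then for any δ > 0, setting ε = (1/α)·log(C/δ), and assuming e^ε ≥ x₀, one has P(S'|θ) ≤ e^ε · P(S'|θ') + δ for every subset S' ⊆ S. -/
import Mathlib


/-- If the likelihood ratio `c s = p s / q s` of two probability
mass functions on a countable set has a Pareto-type tail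
`P({s | c s > x} | θ) ≤ C / x^α` for all `x ≥ x₀`, then for any `δ > 0`,
setting `ε = (1/α) * log (C/δ)` (and assuming `e^ε ≥ x₀`), the
`(ε, δ)`-differential-privacy inequality `P(S'|θ) ≤ e^ε * P(S'|θ') + δ`
holds for every subset `S'`. -/
theorem stmt1 {S : Type*} [Countable S]
    (p q : S → ℝ)
    (hp0 : ∀ s, 0 ≤ p s) (hpsum : Summable p) (hp1 : ∑' s, p s = 1)
    (hq0 : ∀ s, 0 < q s) (hqsum : Summable q) (hq1 : ∑' s, q s = 1)
    (α C x₀ : ℝ) (hα : 0 < α) (hC : 0 < C) (hx₀ : 0 < x₀)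
    (htail : ∀ x ≥ x₀, ∑' s : {s : S // p s / q s > x}, p s.1 ≤ C / x ^ α)
    (δ : ℝ) (hδ : 0 < δ)
    (ε : ℝ) (hε : ε = (1 / α) * Real.log (C / δ))
    (hεx : x₀ ≤ Real.exp ε) :
    ∀ S' : Set S, ∑' s : S', p s.1 ≤ Real.exp ε * (∑' s : S', q s.1) + δ := by
  intro S'
  set E := Real.exp ε with hE
  have hE0 : (0 : ℝ) < E := Real.exp_pos ε
  have hεα : ε * α = Real.log (C / δ) := by
    rw [hε]; field_simp
  have hEα : E ^ α = C / δ := by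
    rw [hE, ← Real.exp_mul, hεα, Real.exp_log (div_pos hC hδ)]
  have hCE : C / E ^ α = δ := by
    rw [hEα]; field_simp
  set A : Set S := {s | p s / q s > E} with hA
  -- tail bound at E
  have htailE : ∑' s : A, p s.1 ≤ δ := by
    have := htail E hεx
    rwa [hCE] at this
  -- summabilities
  have hs1 : Summable ((S' ∩ Aᶜ).indicator p) := hpsum.indicator _
  have hs2 : Summable ((S' ∩ A).indicator p) := hpsum.indicator _
  have hsA : Summable (A.indicator p) := hpsum.indicator _
  have hsq : Summable (S'.indicator q) := hqsum.indicator _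
  have hsplit : S'.indicator p = (S' ∩ Aᶜ).indicator p + (S' ∩ A).indicator p := by
    funext s
    by_cases h : s ∈ S' <;> by_cases h2 : s ∈ A <;>
      simp [Set.indicator_apply, h, h2]
  have key : ∑' s, S'.indicator p s
      = (∑' s, (S' ∩ Aᶜ).indicator p s) + ∑' s, (S' ∩ A).indicator p s := by
    rw [← Summable.tsum_add hs1 hs2]
    exact tsum_congr fun s => by rw [hsplit]; rfl
  have hbound1 : ∑' s, (S' ∩ Aᶜ).indicator p s ≤ E * ∑' s, S'.indicator q s := by
    rw [← tsum_mul_left]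
    refine Summable.tsum_le_tsum (fun s => ?_) hs1 (hsq.mul_left E)
    by_cases h : s ∈ S' ∩ Aᶜ
    · have hle : p s / q s ≤ E := not_lt.mp h.2
      rw [Set.indicator_of_mem h, Set.indicator_of_mem h.1]
      exact (div_le_iff₀ (hq0 s)).mp hle
    · rw [Set.indicator_of_notMem h]
      exact mul_nonneg hE0.le (Set.indicator_nonneg (fun s _ => (hq0 s).le) s)
  have hbound2 : ∑' s, (S' ∩ A).indicator p s ≤ δ := by
    refine le_trans ?_ (le_of_eq_of_le (tsum_subtype A p).symm htailE)
    refine Summable.tsum_le_tsum (fun s => ?_) hs2 hsA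
    by_cases h : s ∈ S' ∩ A
    · rw [Set.indicator_of_mem h, Set.indicator_of_mem h.2]
    · rw [Set.indicator_of_notMem h]
      exact Set.indicator_nonneg (fun s _ => hp0 s) s
  calc ∑' s : S', p s.1 = ∑' s, S'.indicator p s := tsum_subtype S' p
    _ = (∑' s, (S' ∩ Aᶜ).indicator p s) + ∑' s, (S' ∩ A).indicator p s := key
    _ ≤ E * (∑' s, S'.indicator q s) + δ := add_le_add hbound1 hbound2
    _ = E * (∑' s : S', q s.1) + δ := by rw [← tsum_subtype S' q]
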